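/- Let S_t = S_0 e^{X_t} where X is a BGIG(a₊,b₊,p₊,a₋,b₋,p₋) Lévy process with a₊ > 2, defined on a filtered probability space. Then (S_t) is a martingale if and only if (a₊/(a₊-2))^(p₊/2) · K_{p₊}(√(b₊(a₊-2)))/K_{p₊}(√(b₊a₊)) · (a₋/(a₋+2))^(p₋/2) · K_{p₋}(√(b₋(a₋+2)))/K_{p₋}(√(b₋a₋)) = 1. -/

import Mathlib

/-!
Write `φ t = E[e^{X_t}]`, valued in `ℝ≥0∞`. Since `X₁` has the law of `Y₊ - Y₋` with independent
`Y± ∼ GIG(a±, b±, p±)`, Tonelli and translation invariance give `φ 1 = M₊(1) · M₋(-1)` for the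
GIG moment generating functions `M±`. Each of these is computed by the substitution
`x = √(b/a) eᵗ`, which turns the GIG kernel `x^(p-1) e^{-(ax + b/x)/2}` into
`√(b/a)^p e^{pt - √(ab) cosh t}`, whose integral over `ℝ` is `2 K_p(√(ab))`.

If `S₀ e^{X_t}` is a martingale, then `φ 1 = φ 0 = 1`. Conversely, independent stationary
increments make `φ` multiplicative, so `φ 1 = 1` gives `φ = 1` at rational times; stochastic
continuity and Fatou's lemma extend `φ ≤ 1` to all times, and `φ t · φ (n - t) = φ n = 1` forces
`φ = 1`. Then `E[e^{X_t - X_s} | 𝓕 s] = φ (t - s) = 1`, which is the martingale property.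
-/

open MeasureTheory Real Filter Set
open scoped NNReal

/-- Modified Bessel function of the second kind (real order, `x > 0`). -/
noncomputable def besselK (p x : ℝ) : ℝ :=
  ∫ t in Set.Ioi (0:ℝ), Real.exp (-x * Real.cosh t) * Real.cosh (p * t)

/-- The generalized inverse Gaussian density on `(0, ∞)`. -/
noncomputable def gigDensity (a b p x : ℝ) : ℝ :=
  if 0 < x then
    (a / b) ^ (p / 2) / (2 * besselK p (Real.sqrt (a * b)))
      * x ^ (p - 1) * Real.exp (-(a * x + b / x) / 2)
  else 0

/-- The BGIG density of `X₊ - X₋` (convolution of the two GIG densities). -/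
noncomputable def bgigDensity (ap bp pp am bm pm x : ℝ) : ℝ :=
  ∫ y in Set.Ioi (0:ℝ), gigDensity ap bp pp (x + y) * gigDensity am bm pm y

/-- A (real-valued) Lévy process with respect to a filtration: adapted, starting at `0`,
with increments independent of the past, stationary increments, and stochastic continuity. -/
structure IsLevyProcess {Ω : Type*} [m : MeasurableSpace Ω] (μ : MeasureTheory.Measure Ω)
    (𝓕 : MeasureTheory.Filtration ℝ≥0 m) (X : ℝ≥0 → Ω → ℝ) : Prop where
  adapted : MeasureTheory.Adapted 𝓕 X
  zero : ∀ᵐ ω ∂μ, X 0 ω = 0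
  indep_increments : ∀ s t : ℝ≥0, s ≤ t →
    ProbabilityTheory.Indep
      (MeasurableSpace.comap (fun ω => X t ω - X s ω) Real.measurableSpace) (𝓕 s) μ
  stationary_increments : ∀ s t : ℝ≥0,
    μ.map (fun ω => X (s + t) ω - X s ω) = μ.map (X t)
  stochastically_continuous : ∀ (t : ℝ≥0) (ε : ℝ), 0 < ε →
    Filter.Tendsto (fun s : ℝ≥0 => μ {ω | ε ≤ |X s ω - X t ω|}) (nhds t) (nhds 0)

open ProbabilityTheory
open scoped ENNReal Topology

lemma sq_div_four_le_cosh (t : ℝ) : t ^ 2 / 4 ≤ cosh t := by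
  rw [← cosh_abs, cosh_eq]
  nlinarith [quadratic_le_exp_of_nonneg (abs_nonneg t), exp_pos (-|t|), sq_abs t, abs_nonneg t]

lemma mul_sub_mul_cosh_le (p t : ℝ) {s : ℝ} (hs : 0 < s) :
    p * t - s * cosh t ≤ 2 * p ^ 2 / s - s / 8 * t ^ 2 := by
  have hsq : 0 ≤ (s * t - 4 * p) ^ 2 / (8 * s) := by positivity
  have hid : (s * t - 4 * p) ^ 2 / (8 * s) = s / 8 * t ^ 2 - p * t + 2 * p ^ 2 / s := by
    field_simp; ring
  nlinarith [mul_le_mul_of_nonneg_left (sq_div_four_le_cosh t) hs.le]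

lemma integrable_exp_mul_sub_mul_cosh (p : ℝ) {s : ℝ} (hs : 0 < s) :
    Integrable fun t => exp (p * t - s * cosh t) := by
  refine ((integrable_exp_neg_mul_sq (by positivity : 0 < s / 8)).const_mul
    (exp (2 * p ^ 2 / s))).mono' (by fun_prop) (Eventually.of_forall fun t => ?_)
  rw [norm_of_nonneg (exp_pos _).le, ← exp_add]
  exact exp_le_exp.mpr (by linarith [mul_sub_mul_cosh_le p t hs])

lemma besselK_nonneg (p x : ℝ) : 0 ≤ besselK p x :=
  setIntegral_nonneg measurableSet_Ioi fun t _ => by positivity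

lemma integral_exp_mul_sub_mul_cosh (p : ℝ) {s : ℝ} (hs : 0 < s) :
    ∫ t, exp (p * t - s * cosh t) = 2 * besselK p s := by
  set f := fun t => exp (p * t - s * cosh t)
  have hf : Integrable f := integrable_exp_mul_sub_mul_cosh p hs
  have hsymm : ∀ t, f (-t) + f t = 2 * (exp (-s * cosh |t|) * cosh (p * |t|)) := by
    intro t
    rcases abs_choice t with ht | ht <;>
    · simp only [f, ht, mul_neg, cosh_neg, neg_mul, sub_eq_add_neg, exp_add, cosh_eq (p * t)]
      ring
  have h2 : 2 * ∫ t, f t = 2 * (2 * besselK p s) := calc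
    2 * ∫ t, f t = (∫ t, f (-t)) + ∫ t, f t := by rw [integral_neg_eq_self]; ring
    _ = ∫ t, 2 * (exp (-s * cosh |t|) * cosh (p * |t|)) := by
      rw [← integral_add hf.comp_neg hf]; simp only [hsymm]
    _ = 2 * (2 * besselK p s) := by
      rw [integral_const_mul, integral_comp_abs (f := fun u => exp (-s * cosh u) * cosh (p * u)),
        besselK]
  linarith

lemma lintegral_exp_mul_sub_mul_cosh (p : ℝ) {s : ℝ} (hs : 0 < s) :
    ∫⁻ t, ENNReal.ofReal (exp (p * t - s * cosh t)) = ENNReal.ofReal (2 * besselK p s) := by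
  rw [← integral_exp_mul_sub_mul_cosh p hs,
    ofReal_integral_eq_lintegral_ofReal (integrable_exp_mul_sub_mul_cosh p hs)
      (Eventually.of_forall fun t => (exp_pos _).le)]

noncomputable def gigKernel (a b p x : ℝ) : ℝ := x ^ (p - 1) * exp (-(a * x + b / x) / 2)

noncomputable def gigMGF (a b p c : ℝ) : ℝ :=
  (a / (a - 2 * c)) ^ (p / 2) * besselK p √(b * (a - 2 * c)) / besselK p √(b * a)

section GIG

variable {a b p x : ℝ}

lemma gigKernel_nonneg (hx : 0 ≤ x) : 0 ≤ gigKernel a b p x :=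
  mul_nonneg (rpow_nonneg hx _) (exp_pos _).le

lemma exp_mul_mul_gigKernel (c : ℝ) :
    exp (c * x) * gigKernel a b p x = gigKernel (a - 2 * c) b p x := by
  rw [gigKernel, gigKernel, mul_left_comm, ← exp_add]
  ring_nf

lemma gigDensity_of_pos (hx : 0 < x) :
    gigDensity a b p x = (a / b) ^ (p / 2) / (2 * besselK p √(a * b)) * gigKernel a b p x := by
  rw [gigDensity, if_pos hx, gigKernel, mul_assoc]

lemma gigDensity_of_nonpos (hx : x ≤ 0) : gigDensity a b p x = 0 := by
  rw [gigDensity, if_neg (not_lt.mpr hx)]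

lemma gigDensity_nonneg (ha : 0 ≤ a) (hb : 0 ≤ b) (x : ℝ) : 0 ≤ gigDensity a b p x := by
  rcases le_or_gt x 0 with hx | hx
  · rw [gigDensity_of_nonpos hx]
  · rw [gigDensity_of_pos hx]
    have := besselK_nonneg p √(a * b)
    exact mul_nonneg (div_nonneg (rpow_nonneg (div_nonneg ha hb) _) (by positivity))
      (gigKernel_nonneg hx.le)

@[fun_prop]
lemma measurable_gigDensity : Measurable (gigDensity a b p) := by
  unfold gigDensity
  exact Measurable.ite measurableSet_Ioi (by fun_prop) measurable_const

lemma mul_exp_mul_gigKernel_mul_exp (ha : 0 < a) (hb : 0 < b) (t : ℝ) :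
    √(b / a) * exp t * gigKernel a b p (√(b / a) * exp t)
      = √(b / a) ^ p * exp (p * t - √(a * b) * cosh t) := by
  set c := √(b / a)
  set s := √(a * b)
  have hc : 0 < c := sqrt_pos.mpr (by positivity)
  have hac : a * c = s := by
    rw [← sq_eq_sq₀ (by positivity) (by positivity), mul_pow, sq_sqrt (by positivity),
      sq_sqrt (by positivity)]
    field_simp
  have hbc : b / c = s := by
    rw [← sq_eq_sq₀ (by positivity) (by positivity), div_pow, sq_sqrt (by positivity),
      sq_sqrt (by positivity)]
    field_simp
  have hexp : a * (c * exp t) + b / (c * exp t) = s * exp t + s * exp (-t) := calc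
    _ = (a * c) * exp t + (b / c) * exp (-t) := by rw [exp_neg]; field_simp
    _ = s * exp t + s * exp (-t) := by rw [hac, hbc]
  have hexponent : p * t - s * cosh t = t + t * (p - 1) + -(s * exp t + s * exp (-t)) / 2 := by
    rw [cosh_eq]; ring
  rw [gigKernel, hexp, mul_rpow hc.le (exp_pos t).le, ← exp_mul, rpow_sub_one hc.ne', hexponent,
    exp_add, exp_add]
  field_simp

lemma lintegral_gigKernel (ha : 0 < a) (hb : 0 < b) :
    ∫⁻ x in Ioi 0, ENNReal.ofReal (gigKernel a b p x)
      = ENNReal.ofReal ((b / a) ^ (p / 2) * (2 * besselK p √(a * b))) := by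
  have hc : 0 < √(b / a) := sqrt_pos.mpr (by positivity)
  have himage : (fun t => √(b / a) * exp t) '' univ = Ioi 0 := by
    rw [image_univ, range_comp' (√(b / a) * ·) exp, range_exp, image_const_mul_Ioi_zero hc]
  rw [← himage, lintegral_image_eq_lintegral_abs_deriv_mul MeasurableSet.univ
    (fun t _ => ((hasDerivAt_exp t).const_mul _).hasDerivWithinAt)
    (fun u _ v _ h => exp_injective (mul_left_cancel₀ hc.ne' h)), setLIntegral_univ]
  have hpt : ∀ t, ENNReal.ofReal |√(b / a) * exp t|
        * ENNReal.ofReal (gigKernel a b p (√(b / a) * exp t))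
      = ENNReal.ofReal (√(b / a) ^ p) * ENNReal.ofReal (exp (p * t - √(a * b) * cosh t)) := by
    intro t
    rw [abs_of_pos (by positivity), ← ENNReal.ofReal_mul (by positivity),
      mul_exp_mul_gigKernel_mul_exp ha hb, ENNReal.ofReal_mul (by positivity)]
  have hcp : √(b / a) ^ p = (b / a) ^ (p / 2) := by
    rw [sqrt_eq_rpow, ← rpow_mul (by positivity)]
    ring_nf
  simp_rw [hpt]
  rw [lintegral_const_mul' _ _ ENNReal.ofReal_ne_top,
    lintegral_exp_mul_sub_mul_cosh p (sqrt_pos.mpr (by positivity)),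
    ← ENNReal.ofReal_mul (by positivity), hcp]

end GIG

section GIGMoment

variable {a b p c : ℝ}

lemma gigMGF_nonneg (ha : 0 ≤ a) (hc : 2 * c < a) : 0 ≤ gigMGF a b p c :=
  div_nonneg (mul_nonneg (rpow_nonneg (div_nonneg ha (by linarith)) _) (besselK_nonneg _ _))
    (besselK_nonneg _ _)

lemma setLIntegral_exp_mul_gigDensity (ha : 0 ≤ a) (hb : 0 < b) (hc : 2 * c < a) :
    ∫⁻ x in Ioi 0, ENNReal.ofReal (exp (c * x)) * ENNReal.ofReal (gigDensity a b p x)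
      = ENNReal.ofReal (gigMGF a b p c) := by
  have hac : 0 < a - 2 * c := by linarith
  set C := (a / b) ^ (p / 2) / (2 * besselK p √(a * b)) with hC
  calc ∫⁻ x in Ioi 0, ENNReal.ofReal (exp (c * x)) * ENNReal.ofReal (gigDensity a b p x)
      = ∫⁻ x in Ioi 0, ENNReal.ofReal C * ENNReal.ofReal (gigKernel (a - 2 * c) b p x) := by
        refine setLIntegral_congr_fun measurableSet_Ioi fun x hx => ?_
        rw [gigDensity_of_pos hx, ← ENNReal.ofReal_mul (exp_pos _).le, mul_left_comm,
          exp_mul_mul_gigKernel, ENNReal.ofReal_mul' (gigKernel_nonneg hx.le)]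
    _ = ENNReal.ofReal
          (C * ((b / (a - 2 * c)) ^ (p / 2) * (2 * besselK p √((a - 2 * c) * b)))) := by
        rw [lintegral_const_mul' _ _ ENNReal.ofReal_ne_top, lintegral_gigKernel hac hb,
          ← ENNReal.ofReal_mul' (mul_nonneg (rpow_nonneg (by positivity) _)
            (mul_nonneg zero_le_two (besselK_nonneg _ _)))]
    _ = ENNReal.ofReal (gigMGF a b p c) := by
        have hrpow : (a / b) ^ (p / 2) * (b / (a - 2 * c)) ^ (p / 2)
            = (a / (a - 2 * c)) ^ (p / 2) := by
          rw [← mul_rpow (div_nonneg ha hb.le) (div_nonneg hb.le hac.le)]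
          field_simp
        rw [hC, gigMGF, mul_comm b a, mul_comm b (a - 2 * c), ← hrpow]
        congr 1; ring

lemma lintegral_exp_mul_gigDensity (ha : 0 ≤ a) (hb : 0 < b) (hc : 2 * c < a) :
    ∫⁻ x, ENNReal.ofReal (exp (c * x)) * ENNReal.ofReal (gigDensity a b p x)
      = ENNReal.ofReal (gigMGF a b p c) := by
  rw [← setLIntegral_exp_mul_gigDensity ha hb hc, setLIntegral_eq_of_support_subset]
  refine Function.support_subset_iff'.mpr fun x hx => ?_
  rw [gigDensity_of_nonpos (not_lt.mp hx), ENNReal.ofReal_zero, mul_zero]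

end GIGMoment

lemma lintegral_exp_mul_lintegral_add_mul {f g : ℝ → ℝ≥0∞} (hf : Measurable f) (hg : Measurable g)
    (ν : Measure ℝ) [SFinite ν] (c : ℝ) :
    ∫⁻ x, ENNReal.ofReal (exp (c * x)) * ∫⁻ y, f (x + y) * g y ∂ν
      = (∫⁻ x, ENNReal.ofReal (exp (c * x)) * f x)
        * ∫⁻ y, ENNReal.ofReal (exp (-c * y)) * g y ∂ν := by
  have hsplit : ∀ x y, ENNReal.ofReal (exp (c * x)) * (f (x + y) * g y)
      = ENNReal.ofReal (exp (c * (x + y))) * f (x + y) * (ENNReal.ofReal (exp (-c * y)) * g y) := by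
    intro x y
    rw [mul_mul_mul_comm, ← ENNReal.ofReal_mul (exp_pos _).le, ← exp_add]
    ring_nf
  have hmeas : Measurable fun z : ℝ × ℝ =>
      ENNReal.ofReal (exp (c * z.1)) * (f (z.1 + z.2) * g z.2) := by fun_prop
  calc _ = ∫⁻ x, ∫⁻ y, ENNReal.ofReal (exp (c * x)) * (f (x + y) * g y) ∂ν := by
          refine lintegral_congr fun x => ?_
          rw [lintegral_const_mul _ (by fun_prop)]
    _ = ∫⁻ y, (∫⁻ x, ENNReal.ofReal (exp (c * x)) * (f (x + y) * g y)) ∂ν :=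
          lintegral_lintegral_swap hmeas.aemeasurable
    _ = ∫⁻ y, (∫⁻ x, ENNReal.ofReal (exp (c * x)) * f x)
          * (ENNReal.ofReal (exp (-c * y)) * g y) ∂ν := by
          refine lintegral_congr fun y => ?_
          simp_rw [hsplit]
          rw [lintegral_mul_const _ (by fun_prop),
            lintegral_add_right_eq_self (fun u => ENNReal.ofReal (exp (c * u)) * f u)]
    _ = _ := lintegral_const_mul _ (by fun_prop)

section BGIG

variable {ap bp pp am bm pm c : ℝ}

lemma lintegral_exp_mul_lintegral_gigDensity_add_mul (hap : 0 ≤ ap) (hbp : 0 < bp)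
    (ham : 0 ≤ am) (hbm : 0 < bm) (hcp : 2 * c < ap) (hcm : -am < 2 * c) :
    ∫⁻ x, ENNReal.ofReal (exp (c * x)) * ∫⁻ y in Ioi 0,
        ENNReal.ofReal (gigDensity ap bp pp (x + y)) * ENNReal.ofReal (gigDensity am bm pm y)
      = ENNReal.ofReal (gigMGF ap bp pp c) * ENNReal.ofReal (gigMGF am bm pm (-c)) := by
  rw [lintegral_exp_mul_lintegral_add_mul (f := fun u => ENNReal.ofReal (gigDensity ap bp pp u))
    (g := fun u => ENNReal.ofReal (gigDensity am bm pm u)) (by fun_prop) (by fun_prop),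
    lintegral_exp_mul_gigDensity hap hbp hcp,
    setLIntegral_exp_mul_gigDensity ham hbm (by linarith)]

/- `bgigDensity` is a Bochner integral, hence `0` wherever the convolution integrand is not
integrable; the case `c = 0` above shows that this happens only on a null set. -/
lemma ofReal_bgigDensity_ae_eq (hap : 0 < ap) (hbp : 0 < bp) (ham : 0 < am) (hbm : 0 < bm) :
    (fun x => ENNReal.ofReal (bgigDensity ap bp pp am bm pm x))
      =ᵐ[volume] fun x => ∫⁻ y in Ioi 0,
        ENNReal.ofReal (gigDensity ap bp pp (x + y)) * ENNReal.ofReal (gigDensity am bm pm y) := by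
  have hmeas : Measurable fun x => ∫⁻ y in Ioi 0,
      ENNReal.ofReal (gigDensity ap bp pp (x + y)) * ENNReal.ofReal (gigDensity am bm pm y) :=
    Measurable.lintegral_prod_right' (f := fun z : ℝ × ℝ =>
      ENNReal.ofReal (gigDensity ap bp pp (z.1 + z.2)) * ENNReal.ofReal (gigDensity am bm pm z.2))
      (by fun_prop)
  have hfin := lintegral_exp_mul_lintegral_gigDensity_add_mul (pp := pp) (pm := pm) (c := 0)
    hap.le hbp ham.le hbm (by linarith) (by linarith)
  simp only [zero_mul, exp_zero, ENNReal.ofReal_one, one_mul] at hfin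
  filter_upwards [ae_lt_top hmeas (hfin ▸ ENNReal.mul_ne_top ENNReal.ofReal_ne_top
    ENNReal.ofReal_ne_top)] with x hx
  have hnonneg : 0 ≤ᵐ[volume.restrict (Ioi 0)]
      fun y => gigDensity ap bp pp (x + y) * gigDensity am bm pm y :=
    Eventually.of_forall fun y =>
      mul_nonneg (gigDensity_nonneg hap.le hbp.le _) (gigDensity_nonneg ham.le hbm.le _)
  simp_rw [← ENNReal.ofReal_mul (gigDensity_nonneg hap.le hbp.le _)] at hx ⊢
  rw [bgigDensity, ofReal_integral_eq_lintegral_ofReal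
    ⟨by fun_prop, (hasFiniteIntegral_iff_ofReal hnonneg).mpr hx⟩ hnonneg]

lemma lintegral_exp_withDensity_bgigDensity (hap : 2 < ap) (hbp : 0 < bp) (ham : 0 < am)
    (hbm : 0 < bm) :
    ∫⁻ x, ENNReal.ofReal (exp x)
        ∂(volume.withDensity fun x => ENNReal.ofReal (bgigDensity ap bp pp am bm pm x))
      = ENNReal.ofReal (gigMGF ap bp pp 1 * gigMGF am bm pm (-1)) := by
  have h := lintegral_exp_mul_lintegral_gigDensity_add_mul (pp := pp) (pm := pm) (c := 1)
    (by linarith : 0 ≤ ap) hbp ham.le hbm (by linarith) (by linarith)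
  simp only [one_mul] at h
  rw [withDensity_congr_ae (ofReal_bgigDensity_ae_eq (by linarith) hbp ham hbm),
    lintegral_withDensity_eq_lintegral_mul _ (by fun_prop) (by fun_prop)]
  simp_rw [Pi.mul_apply, mul_comm _ (ENNReal.ofReal (exp _))]
  rw [h, ENNReal.ofReal_mul (gigMGF_nonneg (by linarith) (by linarith))]

end BGIG

noncomputable def expMoment {Ω : Type*} [MeasurableSpace Ω] (μ : Measure Ω) (X : ℝ≥0 → Ω → ℝ)
    (t : ℝ≥0) : ℝ≥0∞ :=
  ∫⁻ ω, ENNReal.ofReal (exp (X t ω)) ∂μ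

namespace IsLevyProcess

variable {Ω : Type*} [m : MeasurableSpace Ω] {μ : Measure Ω} {𝓕 : Filtration ℝ≥0 m}
  {X : ℝ≥0 → Ω → ℝ}

lemma measurable (hX : IsLevyProcess μ 𝓕 X) (t : ℝ≥0) : Measurable (X t) :=
  (hX.adapted t).mono (𝓕.le t) le_rfl

lemma measurable_increment (hX : IsLevyProcess μ 𝓕 X) (s t : ℝ≥0) :
    Measurable fun ω => X t ω - X s ω :=
  (hX.measurable t).sub (hX.measurable s)

lemma expMoment_eq_lintegral_map (hX : IsLevyProcess μ 𝓕 X) (t : ℝ≥0) :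
    expMoment μ X t = ∫⁻ x, ENNReal.ofReal (exp x) ∂(μ.map (X t)) := by
  rw [expMoment, lintegral_map (by fun_prop) (hX.measurable t)]

lemma lintegral_exp_sub (hX : IsLevyProcess μ 𝓕 X) {s t : ℝ≥0} (hst : s ≤ t) :
    ∫⁻ ω, ENNReal.ofReal (exp (X t ω - X s ω)) ∂μ = expMoment μ X (t - s) := by
  obtain ⟨u, rfl⟩ := exists_add_of_le hst
  rw [add_tsub_cancel_left, hX.expMoment_eq_lintegral_map, ← hX.stationary_increments s u,
    lintegral_map (by fun_prop) (hX.measurable_increment _ _)]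

lemma expMoment_add (hX : IsLevyProcess μ 𝓕 X) (s t : ℝ≥0) :
    expMoment μ X (s + t) = expMoment μ X s * expMoment μ X t := by
  have hinc : Measurable[MeasurableSpace.comap (fun ω => X (s + t) ω - X s ω) Real.measurableSpace]
      fun ω => ENNReal.ofReal (exp (X (s + t) ω - X s ω)) :=
    (by fun_prop : Measurable fun x => ENNReal.ofReal (exp x)).comp (comap_measurable _)
  have hpast : Measurable[𝓕 s] fun ω => ENNReal.ofReal (exp (X s ω)) :=
    (by fun_prop : Measurable fun x => ENNReal.ofReal (exp x)).comp (hX.adapted s)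
  calc expMoment μ X (s + t)
      = ∫⁻ ω, ENNReal.ofReal (exp (X (s + t) ω - X s ω)) * ENNReal.ofReal (exp (X s ω)) ∂μ := by
        refine lintegral_congr fun ω => ?_
        rw [← ENNReal.ofReal_mul (exp_pos _).le, ← exp_add, sub_add_cancel]
    _ = expMoment μ X t * expMoment μ X s :=
        lintegral_mul_eq_lintegral_mul_lintegral_of_independent_measurableSpace
          (hX.measurable_increment _ _).comap_le (𝓕.le s)
          (hX.indep_increments s (s + t) le_self_add) hinc hpast |>.trans
          (by rw [hX.lintegral_exp_sub le_self_add, add_tsub_cancel_left]; rfl)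
    _ = expMoment μ X s * expMoment μ X t := mul_comm _ _

lemma expMoment_zero [IsProbabilityMeasure μ] (hX : IsLevyProcess μ 𝓕 X) :
    expMoment μ X 0 = 1 := by
  rw [expMoment, lintegral_congr_ae (hX.zero.mono fun ω h => by rw [h, exp_zero]),
    ENNReal.ofReal_one, lintegral_one, measure_univ]

lemma expMoment_nat_mul [IsProbabilityMeasure μ] (hX : IsLevyProcess μ 𝓕 X) (n : ℕ)
    (t : ℝ≥0) : expMoment μ X (n * t) = expMoment μ X t ^ n := by
  induction n with
  | zero => simpa using hX.expMoment_zero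
  | succ k ih => rw [Nat.cast_succ, add_one_mul, hX.expMoment_add, ih, pow_succ]

lemma expMoment_nat_div [IsProbabilityMeasure μ] (hX : IsLevyProcess μ 𝓕 X)
    (h1 : expMoment μ X 1 = 1) (n : ℕ) {d : ℕ} (hd : d ≠ 0) :
    expMoment μ X (n / d) = 1 := by
  refine (ENNReal.pow_right_strictMono hd).injective ?_
  simp only [one_pow]
  rw [← hX.expMoment_nat_mul, mul_div_cancel₀ _ (Nat.cast_ne_zero.mpr hd), ← mul_one (n : ℝ≥0),
    hX.expMoment_nat_mul, h1, one_pow]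

lemma expMoment_le_of_tendsto (hX : IsLevyProcess μ 𝓕 X) {s : ℕ → ℝ≥0} {t : ℝ≥0}
    (hs : Tendsto s atTop (𝓝 t)) {C : ℝ≥0∞} (hC : ∀ n, expMoment μ X (s n) ≤ C) :
    expMoment μ X t ≤ C := by
  have hmeas : TendstoInMeasure μ (fun n => X (s n)) atTop (X t) := by
    rw [tendstoInMeasure_iff_dist]
    intro ε hε
    simpa [Real.dist_eq, Function.comp_def] using
      (hX.stochastically_continuous t ε hε).comp hs
  obtain ⟨ns, -, hae⟩ := hmeas.exists_seq_tendsto_ae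
  calc expMoment μ X t
      = ∫⁻ ω, liminf (fun k => ENNReal.ofReal (exp (X (s (ns k)) ω))) atTop ∂μ := by
        refine lintegral_congr_ae (hae.mono fun ω hω => ?_)
        exact (((ENNReal.continuous_ofReal.comp continuous_exp).tendsto _).comp hω).liminf_eq.symm
    _ ≤ liminf (fun k => expMoment μ X (s (ns k))) atTop :=
        lintegral_liminf_le fun k =>
          (ENNReal.measurable_ofReal.comp measurable_exp).comp (hX.measurable _)
    _ ≤ C := liminf_le_of_frequently_le' (Frequently.of_forall fun k => hC _)

lemma expMoment_eq_one [IsProbabilityMeasure μ] (hX : IsLevyProcess μ 𝓕 X)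
    (h1 : expMoment μ X 1 = 1) (t : ℝ≥0) : expMoment μ X t = 1 := by
  have hle : ∀ u, expMoment μ X u ≤ 1 := fun u =>
    hX.expMoment_le_of_tendsto (s := fun k : ℕ => (⌊u * k⌋₊ : ℝ≥0) / k)
      (by rw [← NNReal.tendsto_coe]; push_cast
          exact (tendsto_nat_floor_mul_div_atTop u.2).comp tendsto_natCast_atTop_atTop)
      fun k => by
        rcases eq_or_ne k 0 with rfl | hk
        · simp [hX.expMoment_zero]
        · exact (hX.expMoment_nat_div h1 _ hk).le
  obtain ⟨n, hn⟩ := exists_nat_ge t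
  have hprod : expMoment μ X t * expMoment μ X (n - t) = 1 := by
    rw [← hX.expMoment_add, add_tsub_cancel_of_le hn, ← mul_one (n : ℝ≥0), hX.expMoment_nat_mul,
      h1, one_pow]
  refine le_antisymm (hle t) ?_
  calc 1 = expMoment μ X t * expMoment μ X (n - t) := hprod.symm
    _ ≤ expMoment μ X t * 1 := mul_le_mul_right (hle _) _
    _ = expMoment μ X t := mul_one _

lemma integral_exp_eq_toReal_expMoment (hX : IsLevyProcess μ 𝓕 X) (t : ℝ≥0) :
    ∫ ω, exp (X t ω) ∂μ = (expMoment μ X t).toReal :=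
  integral_eq_lintegral_of_nonneg_ae (Eventually.of_forall fun _ => (exp_pos _).le)
    (hX.measurable t).exp.aestronglyMeasurable

lemma condExp_exp_sub [IsFiniteMeasure μ] (hX : IsLevyProcess μ 𝓕 X) {s t : ℝ≥0} (hst : s ≤ t) :
    μ[fun ω => exp (X t ω - X s ω) | 𝓕 s] =ᵐ[μ] fun _ => (expMoment μ X (t - s)).toReal := by
  have hinc := hX.measurable_increment s t
  rw [← hX.lintegral_exp_sub hst, ← integral_eq_lintegral_of_nonneg_ae
    (ae_of_all _ fun _ => (exp_pos _).le) hinc.exp.aestronglyMeasurable]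
  exact condExp_indep_eq hinc.comap_le (𝓕.le s)
    (measurable_exp.comp (comap_measurable _)).stronglyMeasurable (hX.indep_increments s t hst)

lemma martingale_const_mul_exp [IsFiniteMeasure μ] (hX : IsLevyProcess μ 𝓕 X)
    (h1 : ∀ t, expMoment μ X t = 1) (c : ℝ) :
    Martingale (fun t ω => c * exp (X t ω)) 𝓕 μ := by
  have hadapted : ∀ t, StronglyMeasurable[𝓕 t] fun ω => c * exp (X t ω) := fun t =>
    ((hX.adapted t).exp.const_mul c).stronglyMeasurable
  refine ⟨hadapted, fun s t hst => ?_⟩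
  have hexp_nonneg : ∀ f : Ω → ℝ, 0 ≤ᵐ[μ] fun ω => exp (f ω) := fun f =>
    ae_of_all _ fun _ => (exp_pos _).le
  have hinc_int : Integrable (fun ω => exp (X t ω - X s ω)) μ :=
    (lintegral_ofReal_ne_top_iff_integrable
      (hX.measurable_increment s t).exp.aestronglyMeasurable (hexp_nonneg _)).mp
      (by rw [hX.lintegral_exp_sub hst, h1]; exact ENNReal.one_ne_top)
  have hSt_int : Integrable (fun ω => c * exp (X t ω)) μ :=
    ((lintegral_ofReal_ne_top_iff_integrable (hX.measurable t).exp.aestronglyMeasurable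
      (hexp_nonneg _)).mp (by rw [← expMoment, h1]; exact ENNReal.one_ne_top)).const_mul c
  have hdecomp : (fun ω => c * exp (X t ω))
      = (fun ω => c * exp (X s ω)) * fun ω => exp (X t ω - X s ω) := by
    funext ω
    simp only [Pi.mul_apply, mul_assoc, ← exp_add, add_sub_cancel]
  show μ[fun ω => c * exp (X t ω) | 𝓕 s] =ᵐ[μ] fun ω => c * exp (X s ω)
  rw [hdecomp] at hSt_int ⊢
  filter_upwards [condExp_mul_of_stronglyMeasurable_left (hadapted s) hSt_int hinc_int,
    hX.condExp_exp_sub hst] with ω hmul hinc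
  rw [hmul, Pi.mul_apply, hinc, h1, ENNReal.toReal_one, mul_one]

lemma expMoment_eq_one_of_martingale [IsProbabilityMeasure μ] (hX : IsLevyProcess μ 𝓕 X)
    {c : ℝ} (hc : c ≠ 0) (hM : Martingale (fun t ω => c * exp (X t ω)) 𝓕 μ) (t : ℝ≥0) :
    expMoment μ X t = 1 := by
  have hint : ∫ ω, c * exp (X 0 ω) ∂μ = ∫ ω, c * exp (X t ω) ∂μ := by
    simpa using hM.setIntegral_eq zero_le MeasurableSet.univ
  have h0 : ∫ ω, c * exp (X 0 ω) ∂μ = c := by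
    rw [integral_congr_ae (hX.zero.mono fun ω h => by rw [h, exp_zero, mul_one]), integral_const,
      probReal_univ, one_smul]
  rw [h0, integral_const_mul, hX.integral_exp_eq_toReal_expMoment] at hint
  exact (ENNReal.toReal_eq_one_iff _).mp (mul_left_cancel₀ hc (by rw [mul_one, ← hint]))

end IsLevyProcess

/-- Martingale condition for the exponential BGIG stock model: `S_t = S₀ e^{X_t}` is a
martingale iff the Bessel-function expression for `E[e^{X₁}]` equals `1`. -/
theorem expBGIG_martingale_iff {Ω : Type*} [m : MeasurableSpace Ω]
    (μ : MeasureTheory.Measure Ω) [IsProbabilityMeasure μ]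
    (𝓕 : MeasureTheory.Filtration ℝ≥0 m) (X : ℝ≥0 → Ω → ℝ)
    (hLevy : IsLevyProcess μ 𝓕 X)
    (ap bp pp am bm pm S0 : ℝ) (hap : 2 < ap) (hbp : 0 < bp) (ham : 0 < am) (hbm : 0 < bm)
    (hS0 : 0 < S0)
    (hlaw : μ.map (X 1) = (volume : Measure ℝ).withDensity
        fun x => ENNReal.ofReal (bgigDensity ap bp pp am bm pm x)) :
    MeasureTheory.Martingale (fun (t : ℝ≥0) ω => S0 * Real.exp (X t ω)) 𝓕 μ ↔
      (ap / (ap - 2)) ^ (pp / 2)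
          * besselK pp (Real.sqrt (bp * (ap - 2))) / besselK pp (Real.sqrt (bp * ap))
        * ((am / (am + 2)) ^ (pm / 2)
          * besselK pm (Real.sqrt (bm * (am + 2))) / besselK pm (Real.sqrt (bm * am))) = 1 := by
  have hmoment : expMoment μ X 1 = ENNReal.ofReal (gigMGF ap bp pp 1 * gigMGF am bm pm (-1)) := by
    rw [hLevy.expMoment_eq_lintegral_map, hlaw,
      lintegral_exp_withDensity_bgigDensity hap hbp ham hbm]
  simp only [gigMGF, mul_one, mul_neg, sub_neg_eq_add] at hmoment
  rw [← ENNReal.ofReal_eq_one, ← hmoment]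
  exact ⟨fun hM => hLevy.expMoment_eq_one_of_martingale hS0.ne' hM 1,
    fun h1 => hLevy.martingale_const_mul_exp (hLevy.expMoment_eq_one h1) S0⟩
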